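/- arXiv:2010.11410 — 7 statements merged into one kernel-verified Lean document; each statement's English description precedes it below -/
import Mathlib

section
/- For any f : T → X, the limit of V_ε(f,T) as ε → 0⁺ equals sup_{ε>0} V_ε(f,T), which equals the Jordan variation V(f,T) (as elements of [0,∞]). -/
/-!
If `g` is `ε`-close to `f` on `T`, each partition sum of `f` with `n` intervals exceeds that of
`g` by at most `2nε`, so it is at most `appVar ε f T + 2nε`. Letting `ε → 0⁺` gives
`jordanVar f T ≤ ⨆ ε > 0, appVar ε f T`; the reverse inequality holds because `f` approximates
itself. Since `appVar ε f T` is antitone in `ε`, its limit at `0⁺` is that supremum.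
-/

open Filter Set Topology

noncomputable def jordanVar {X : Type*} [PseudoMetricSpace X] (f : ℝ → X) (S : Set ℝ) : ENNReal :=
  ⨆ (n : ℕ) (t : Fin (n+1) → ℝ) (_ : Monotone t) (_ : ∀ i, t i ∈ S),
    ∑ i : Fin n, edist (f (t i.succ)) (f (t i.castSucc))

noncomputable def appVar {X : Type*} [PseudoMetricSpace X] (ε : ℝ) (f : ℝ → X) (S : Set ℝ) : ENNReal :=
  ⨅ (g : ℝ → X) (_ : jordanVar g S < ⊤) (_ : ∀ t ∈ S, dist (f t) (g t) ≤ ε), jordanVar g S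

lemma edist_le_edist_add_two_mul {X : Type*} [PseudoEMetricSpace X] {a b a' b' : X}
    {δ : ENNReal} (ha : edist a a' ≤ δ) (hb : edist b b' ≤ δ) :
    edist a b ≤ edist a' b' + 2 * δ :=
  calc edist a b ≤ edist a a' + edist a' b' + edist b' b := edist_triangle4 _ _ _ _
    _ ≤ δ + edist a' b' + δ := by gcongr; rwa [edist_comm]
    _ = edist a' b' + 2 * δ := by ring

section Variation

variable {X : Type*} [PseudoMetricSpace X] (f : ℝ → X) (S : Set ℝ)

lemma sum_edist_le_jordanVar {n : ℕ} {t : Fin (n+1) → ℝ} (ht : Monotone t)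
    (htS : ∀ i, t i ∈ S) :
    ∑ i : Fin n, edist (f (t i.succ)) (f (t i.castSucc)) ≤ jordanVar f S :=
  le_iSup_of_le n <| le_iSup_of_le t <| le_iSup_of_le ht <| le_iSup_of_le htS le_rfl

lemma antitone_appVar : Antitone fun ε => appVar ε f S :=
  fun _ _ hε => le_iInf₂ fun g hg => le_iInf fun hfg =>
    iInf₂_le_of_le g hg <| iInf_le_of_le (fun s hs => (hfg s hs).trans hε) le_rfl

lemma appVar_le_jordanVar {ε : ℝ} (hε : 0 ≤ ε) : appVar ε f S ≤ jordanVar f S := by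
  rcases eq_or_ne (jordanVar f S) ⊤ with h | h
  · simp [h]
  · exact iInf₂_le_of_le f h.lt_top <| iInf_le_of_le (fun s _ => by simpa using hε) le_rfl

lemma sum_edist_le_sum_edist_add {g : ℝ → X} {δ : ENNReal}
    (hfg : ∀ s ∈ S, edist (f s) (g s) ≤ δ) {n : ℕ} {t : Fin (n+1) → ℝ} (htS : ∀ i, t i ∈ S) :
    ∑ i : Fin n, edist (f (t i.succ)) (f (t i.castSucc))
      ≤ ∑ i : Fin n, edist (g (t i.succ)) (g (t i.castSucc)) + n * (2 * δ) :=
  calc ∑ i : Fin n, edist (f (t i.succ)) (f (t i.castSucc))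
      ≤ ∑ i : Fin n, (edist (g (t i.succ)) (g (t i.castSucc)) + 2 * δ) :=
        Finset.sum_le_sum fun i _ =>
          edist_le_edist_add_two_mul (hfg _ (htS _)) (hfg _ (htS _))
    _ = ∑ i : Fin n, edist (g (t i.succ)) (g (t i.castSucc)) + n * (2 * δ) := by
        simp [Finset.sum_add_distrib]

lemma sum_edist_le_appVar_add (ε : ℝ) {n : ℕ} {t : Fin (n+1) → ℝ} (ht : Monotone t)
    (htS : ∀ i, t i ∈ S) :
    ∑ i : Fin n, edist (f (t i.succ)) (f (t i.castSucc))
      ≤ appVar ε f S + n * (2 * ENNReal.ofReal ε) := by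
  refine tsub_le_iff_right.1 <| le_iInf₂ fun g _ => le_iInf fun hfg => tsub_le_iff_right.2 ?_
  have hfg' : ∀ s ∈ S, edist (f s) (g s) ≤ ENNReal.ofReal ε := fun s hs => by
    rw [edist_dist]; exact ENNReal.ofReal_le_ofReal (hfg s hs)
  calc _ ≤ _ := sum_edist_le_sum_edist_add f S hfg' htS
    _ ≤ _ := by gcongr; exact sum_edist_le_jordanVar g S ht htS

lemma jordanVar_le_iSup_appVar : jordanVar f S ≤ ⨆ ε ∈ Ioi (0 : ℝ), appVar ε f S := by
  refine iSup_le fun n => iSup_le fun t => iSup_le fun ht => iSup_le fun htS => ?_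
  set L := ⨆ ε ∈ Ioi (0 : ℝ), appVar ε f S
  have hlim : Tendsto (fun ε : ℝ => L + n * (2 * ENNReal.ofReal ε)) (𝓝[>] 0) (𝓝 L) := by
    have hcont : Continuous fun ε : ℝ => L + n * (2 * ENNReal.ofReal ε) :=
      continuous_const.add <| (ENNReal.continuous_const_mul (by simp)).comp <|
        (ENNReal.continuous_const_mul (by simp)).comp ENNReal.continuous_ofReal
    simpa using hcont.continuousWithinAt.tendsto (x := 0) (s := Ioi 0)
  refine ge_of_tendsto hlim <| eventually_nhdsWithin_of_forall fun ε hε => ?_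
  exact (sum_edist_le_appVar_add f S ε ht htS).trans <|
    add_le_add_left (le_iSup₂ (f := fun ε _ => appVar ε f S) ε hε) _

lemma iSup_appVar_eq_jordanVar : (⨆ ε ∈ Ioi (0 : ℝ), appVar ε f S) = jordanVar f S :=
  le_antisymm (iSup₂_le fun _ hε => appVar_le_jordanVar f S (le_of_lt hε))
    (jordanVar_le_iSup_appVar f S)

end Variation

theorem stmt8_general {X : Type*} [PseudoMetricSpace X] (T : Set ℝ)
    (f : ℝ → X) :
    Filter.Tendsto (fun ε => appVar ε f T) (nhdsWithin 0 (Set.Ioi 0))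
      (nhds (jordanVar f T)) ∧
    (⨆ ε ∈ Set.Ioi (0 : ℝ), appVar ε f T) = jordanVar f T := by
  refine ⟨?_, iSup_appVar_eq_jordanVar f T⟩
  have hlim := (antitone_appVar f T).tendsto_nhdsGT 0
  rwa [sSup_image, iSup_appVar_eq_jordanVar] at hlim

theorem stmt8 {X : Type*} [PseudoMetricSpace X] (T : Set ℝ) (hT : T.Nonempty)
    (f : ℝ → X) :
    Filter.Tendsto (fun ε => appVar ε f T) (nhdsWithin 0 (Set.Ioi 0))
      (nhds (jordanVar f T)) ∧
    (⨆ ε ∈ Set.Ioi (0 : ℝ), appVar ε f T) = jordanVar f T :=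
  stmt8_general T f
end

section
/- Superadditivity of the approximate variation: for f : T → X, ε > 0 and t ∈ T, writing T⁻ = T ∩ (−∞,t] and T⁺ = T ∩ [t,∞), one has V_ε(f,T⁻) + V_ε(f,T⁺) ≤ V_ε(f,T). -/
open Filter Set

/-! Any `g` admissible for `V_ε(f, T)` is admissible on both halves `T ∩ Iic t` and `T ∩ Ici t`, and the
variation of `g` is superadditive across the cut at `t`, since every point of the first half lies
below every point of the second. -/

section
variable {X : Type*} [PseudoMetricSpace X]

theorem jordanVar_eq_eVariationOn (f : ℝ → X) (S : Set ℝ) :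
    jordanVar f S = eVariationOn f S := by
  apply le_antisymm
  · refine iSup_le fun n => iSup_le fun t => iSup_le fun ht => iSup_le fun htS => ?_
    -- repeating the last point `t n` extends the partition to `ℕ` with zero-length steps
    have hclamp : Monotone fun i : ℕ => Fin.clamp i n := fun i j hij =>
      Fin.mk_le_mk.2 (min_le_min_right n hij)
    calc ∑ i : Fin n, edist (f (t i.succ)) (f (t i.castSucc))
        = ∑ i ∈ Finset.range n, edist (f (t (Fin.clamp (i + 1) n))) (f (t (Fin.clamp i n))) := by
          rw [← Fin.sum_univ_eq_sum_range]
          refine Finset.sum_congr rfl fun i _ => ?_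
          congr <;> ext <;> simp [Fin.clamp]
      _ ≤ eVariationOn f S := eVariationOn.sum_le (ht.comp hclamp) fun i => htS _
  · refine iSup_le fun ⟨n, u, hu, huS⟩ => ?_
    refine le_iSup_of_le n <| le_iSup_of_le (u ∘ Fin.val) <|
      le_iSup_of_le (hu.comp fun _ _ h => h) <| le_iSup_of_le (fun i => huS i) ?_
    simp [← Fin.sum_univ_eq_sum_range]

theorem jordanVar_mono (f : ℝ → X) {S S' : Set ℝ} (h : S ⊆ S') : jordanVar f S ≤ jordanVar f S' := by
  simpa only [jordanVar_eq_eVariationOn] using eVariationOn.mono f h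

theorem jordanVar_Iic_add_Ici_le (f : ℝ → X) (S : Set ℝ) (t : ℝ) :
    jordanVar f (S ∩ Iic t) + jordanVar f (S ∩ Ici t) ≤ jordanVar f S := by
  simp only [jordanVar_eq_eVariationOn]
  calc eVariationOn f (S ∩ Iic t) + eVariationOn f (S ∩ Ici t)
      ≤ eVariationOn f (S ∩ Iic t ∪ S ∩ Ici t) :=
        eVariationOn.add_le_union f fun _ hx _ hy => hx.2.trans hy.2
    _ = eVariationOn f S := by rw [← inter_union_distrib_left, Iic_union_Ici, inter_univ]

theorem appVar_le_jordanVar_s10 {ε : ℝ} {f g : ℝ → X} {S : Set ℝ} (hg : jordanVar g S < ⊤)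
    (hfg : ∀ t ∈ S, dist (f t) (g t) ≤ ε) : appVar ε f S ≤ jordanVar g S :=
  iInf₂_le_of_le g hg <| iInf_le _ hfg

end

theorem stmt10_general {X : Type*} [PseudoMetricSpace X] (T : Set ℝ)
    (f : ℝ → X) (ε : ℝ) (t : ℝ) :
    appVar ε f (T ∩ Set.Iic t) + appVar ε f (T ∩ Set.Ici t) ≤ appVar ε f T := by
  refine le_iInf₂ fun g hg => le_iInf fun hfg => ?_
  have restrict {S : Set ℝ} (hS : S ⊆ T) : appVar ε f S ≤ jordanVar g S :=
    appVar_le_jordanVar_s10 ((jordanVar_mono g hS).trans_lt hg) fun s hs => hfg s (hS hs)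
  calc appVar ε f (T ∩ Iic t) + appVar ε f (T ∩ Ici t)
      ≤ jordanVar g (T ∩ Iic t) + jordanVar g (T ∩ Ici t) :=
        add_le_add (restrict inter_subset_left) (restrict inter_subset_left)
    _ ≤ jordanVar g T := jordanVar_Iic_add_Ici_le g T t

theorem stmt10 {X : Type*} [PseudoMetricSpace X] (T : Set ℝ) (hT : T.Nonempty)
    (f : ℝ → X) (ε : ℝ) (hε : 0 < ε) (t : ℝ) (ht : t ∈ T) :
    appVar ε f (T ∩ Set.Iic t) + appVar ε f (T ∩ Set.Ici t) ≤ appVar ε f T :=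
  stmt10_general T f ε t
end

section
/- Almost-subadditivity of the approximate variation: for f : T → X, ε > 0 and t ∈ T, with T⁻ = T ∩ (−∞,t] and T⁺ = T ∩ [t,∞), one has V_ε(f,T) ≤ V_ε(f,T⁻) + V_ε(f,T⁺) + 2ε. -/
open Filter Set

/-! Take `ε`-approximants `g₁` of `f` on `T ∩ Iic t` and `g₂` on `T ∩ Ici t` and glue them into the
function equal to `g₁` up to `t` and to `g₂` after `t`, an `ε`-approximant on `T`. On `T ∩ Ici t` it
differs from `g₂` only at the least point `t`, which enters a single increment of any partition, so
its variation exceeds the sum of those of `g₁` and `g₂` by at most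
`edist (g₁ t) (g₂ t) ≤ 2ε`. -/

namespace eVariationOn

variable {α E : Type*} [LinearOrder α] [PseudoEMetricSpace E]

theorem le_add_edist_of_eqOn_diff_least {f g : α → E} {s : Set α} {a : α} (ha : IsLeast s a)
    (hfg : EqOn f g (s \ {a})) : eVariationOn f s ≤ eVariationOn g s + edist (f a) (g a) := by
  rw [eVariationOn_eq_strictMonoOn]
  refine iSup_le fun ⟨n, u, hu, us⟩ ↦ ?_
  cases n with
  | zero => simp
  | succ n =>
    have hu_mem : ∀ i, 1 ≤ i → i ≤ n + 1 → u i ∈ s \ {a} := fun i hi hin ↦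
      ⟨us i hin, (ha.2 (us 0 (Nat.zero_le _))).trans_lt
        (hu (Nat.zero_le _) hin (by omega)) |>.ne'⟩
    have hu_zero : edist (f (u 0)) (g (u 0)) ≤ edist (f a) (g a) := by
      by_cases h0 : u 0 = a
      · rw [h0]
      · rw [hfg ⟨us 0 (Nat.zero_le _), h0⟩, edist_self]
        exact zero_le
    calc ∑ i ∈ Finset.range (n + 1), edist (f (u (i + 1))) (f (u i))
        = ∑ i ∈ Finset.range n, edist (g (u (i + 1 + 1))) (g (u (i + 1)))
            + edist (g (u 1)) (f (u 0)) := by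
          rw [Finset.sum_range_succ', hfg (hu_mem 1 le_rfl (by omega))]
          congr 1
          refine Finset.sum_congr rfl fun i hi ↦ ?_
          have hin := Finset.mem_range.1 hi
          rw [hfg (hu_mem (i + 1 + 1) (by omega) (by omega)),
            hfg (hu_mem (i + 1) (by omega) (by omega))]
      _ ≤ ∑ i ∈ Finset.range n, edist (g (u (i + 1 + 1))) (g (u (i + 1)))
            + (edist (g (u 1)) (g (u 0)) + edist (f a) (g a)) := by
          gcongr
          rw [edist_comm (f (u 0))] at hu_zero
          exact (edist_triangle _ (g (u 0)) _).trans (add_le_add_right hu_zero _)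
      _ = ∑ i ∈ Finset.range (n + 1), edist (g (u (i + 1))) (g (u i)) + edist (f a) (g a) := by
          rw [Finset.sum_range_succ', add_assoc]
      _ ≤ _ := by
          gcongr
          exact sum_le_of_monotoneOn_Iic hu.monotoneOn us

theorem ite_le_add_edist (g₁ g₂ : α → E) {s t : Set α} {a : α} (hs : IsGreatest s a)
    (ht : IsLeast t a) :
    eVariationOn (fun x ↦ if x ≤ a then g₁ x else g₂ x) (s ∪ t)
      ≤ eVariationOn g₁ s + eVariationOn g₂ t + edist (g₁ a) (g₂ a) := by
  rw [union _ hs ht, add_assoc]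
  gcongr
  · exact (eq_of_eqOn fun x hx ↦ if_pos (hs.2 hx)).le
  have hg₂ : EqOn (fun x ↦ if x ≤ a then g₁ x else g₂ x) g₂ (t \ {a}) := fun x hx ↦
    if_neg ((ht.2 hx.1).lt_of_ne' hx.2).not_ge
  simpa using le_add_edist_of_eqOn_diff_least ht hg₂

end eVariationOn

section ApproximateVariation

variable {X : Type*} [PseudoMetricSpace X]

theorem appVar_union_le (ε : ℝ) (f : ℝ → X) {S₁ S₂ : Set ℝ} {t : ℝ} (h₁ : IsGreatest S₁ t)
    (h₂ : IsLeast S₂ t) :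
    appVar ε f (S₁ ∪ S₂) ≤ appVar ε f S₁ + appVar ε f S₂ + 2 * ENNReal.ofReal ε := by
  simp only [appVar, jordanVar_eq_eVariationOn, ENNReal.iInf_add, ENNReal.add_iInf, le_iInf_iff]
  intro g₂ hg₂ hfg₂ g₁ hg₁ hfg₁
  set g := fun x ↦ if x ≤ t then g₁ x else g₂ x
  have hjump : edist (g₁ t) (g₂ t) ≤ 2 * ENNReal.ofReal ε :=
    calc edist (g₁ t) (g₂ t) ≤ edist (f t) (g₁ t) + edist (f t) (g₂ t) := edist_triangle_left _ _ _
      _ ≤ ENNReal.ofReal ε + ENNReal.ofReal ε := by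
          rw [edist_dist, edist_dist]
          gcongr
          exacts [hfg₁ t h₁.1, hfg₂ t h₂.1]
      _ = 2 * ENNReal.ofReal ε := (two_mul _).symm
  have hvar : eVariationOn g (S₁ ∪ S₂)
      ≤ eVariationOn g₁ S₁ + eVariationOn g₂ S₂ + 2 * ENNReal.ofReal ε :=
    (eVariationOn.ite_le_add_edist g₁ g₂ h₁ h₂).trans (by gcongr)
  have hfg : ∀ x ∈ S₁ ∪ S₂, dist (f x) (g x) ≤ ε := by
    rintro x (hx | hx)
    · simpa only [g, if_pos (h₁.2 hx)] using hfg₁ x hx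
    · by_cases hxt : x ≤ t
      · obtain rfl := le_antisymm hxt (h₂.2 hx)
        simpa only [g, if_pos hxt] using hfg₁ x h₁.1
      · simpa only [g, if_neg hxt] using hfg₂ x hx
  exact iInf_le_of_le g <| iInf_le_of_le (hvar.trans_lt (by finiteness)) <| iInf_le_of_le hfg hvar

end ApproximateVariation

theorem stmt11_general {X : Type*} [PseudoMetricSpace X] (T : Set ℝ)
    (f : ℝ → X) (ε : ℝ) (t : ℝ) (ht : t ∈ T) :
    appVar ε f T ≤
      appVar ε f (T ∩ Set.Iic t) + appVar ε f (T ∩ Set.Ici t) + 2 * ENNReal.ofReal ε := by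
  have hsplit : T ∩ Iic t ∪ T ∩ Ici t = T := by
    rw [← inter_union_distrib_left, Iic_union_Ici, inter_univ]
  simpa only [hsplit] using
    appVar_union_le ε f (S₁ := T ∩ Iic t) (S₂ := T ∩ Ici t)
      ⟨⟨ht, self_mem_Iic⟩, fun _ hx ↦ hx.2⟩ ⟨⟨ht, self_mem_Ici⟩, fun _ hx ↦ hx.2⟩

theorem stmt11 {X : Type*} [PseudoMetricSpace X] (T : Set ℝ) (hT : T.Nonempty)
    (f : ℝ → X) (ε : ℝ) (hε : 0 < ε) (t : ℝ) (ht : t ∈ T) :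
    appVar ε f T ≤
      appVar ε f (T ∩ Set.Iic t) + appVar ε f (T ∩ Set.Ici t) + 2 * ENNReal.ofReal ε :=
  stmt11_general T f ε t ht
end

section
/- If f : T → X satisfies V_ε(f,T) < ∞ for every ε > 0, then f is regulated on T: for every τ ∈ T that is a left limit point of T, d(f(s),f(t)) → 0 as s,t → τ⁻ in T, and similarly at every right limit point of T. -/
open Filter Set

def RegulatedOn {X : Type*} [PseudoMetricSpace X] (f : ℝ → X) (T : Set ℝ) : Prop :=
  (∀ τ ∈ T, (∀ δ > 0, (T ∩ Set.Ioo (τ - δ) τ).Nonempty) →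
    ∀ η > 0, ∃ δ > 0, ∀ s ∈ T ∩ Set.Ioo (τ - δ) τ, ∀ u ∈ T ∩ Set.Ioo (τ - δ) τ,
      dist (f s) (f u) ≤ η) ∧
  (∀ τ ∈ T, (∀ δ > 0, (T ∩ Set.Ioo τ (τ + δ)).Nonempty) →
    ∀ η > 0, ∃ δ > 0, ∀ s ∈ T ∩ Set.Ioo τ (τ + δ), ∀ u ∈ T ∩ Set.Ioo τ (τ + δ),
      dist (f s) (f u) ≤ η)

/-!
A function `g` of bounded variation on `T` is controlled by its variation function
`φ x = Var(g, T ∩ (-∞, x])`: this is monotone and bounded, and `d(g s, g u) ≤ |φ u - φ s|`.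
A monotone real function has one-sided limits, hence is Cauchy from either side of every point,
and so is `g`. Finally `f` is uniformly `ε`-close to such a `g` for every `ε > 0`.
-/

open Topology

lemma exists_pos_forall_dist_lt_of_tendsto {α β : Type*} [PseudoMetricSpace α]
    [PseudoMetricSpace β] {φ : α → β} {S : Set α} {τ : α} {L : β}
    (hφ : Tendsto φ (𝓝[S] τ) (𝓝 L)) {η : ℝ} (hη : 0 < η) :
    ∃ δ > 0, ∀ s ∈ S ∩ Metric.ball τ δ, ∀ u ∈ S ∩ Metric.ball τ δ, dist (φ s) (φ u) < η := by
  obtain ⟨δ, hδ, hL⟩ := Metric.tendsto_nhdsWithin_nhds.1 hφ (η / 2) (half_pos hη)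
  refine ⟨δ, hδ, fun s hs u hu => ?_⟩
  calc dist (φ s) (φ u) ≤ dist (φ s) L + dist (φ u) L := dist_triangle_right _ _ _
    _ < η / 2 + η / 2 := add_lt_add (hL hs.1 hs.2) (hL hu.1 hu.2)
    _ = η := add_halves η

section Variation

variable {X : Type*} [PseudoMetricSpace X]

lemma eVariationOn_le_jordanVar (g : ℝ → X) (T : Set ℝ) : eVariationOn g T ≤ jordanVar g T := by
  refine iSup_le fun ⟨n, u, hu, huT⟩ => ?_
  refine le_iSup_of_le n <| le_iSup_of_le (fun i : Fin (n + 1) => u i) <|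
    le_iSup_of_le (fun _ _ hij => hu hij) <| le_iSup_of_le (fun i => huT i) ?_
  exact (Fin.sum_univ_eq_sum_range (fun i => edist (g (u (i + 1))) (g (u i))) n).ge

lemma exists_boundedVariationOn_of_appVar_lt_top {ε : ℝ} {f : ℝ → X} {T : Set ℝ}
    (h : appVar ε f T < ⊤) :
    ∃ g : ℝ → X, BoundedVariationOn g T ∧ ∀ t ∈ T, dist (f t) (g t) ≤ ε := by
  simp only [appVar, iInf_lt_iff] at h
  obtain ⟨g, hg, happrox, -⟩ := h
  exact ⟨g, ((eVariationOn_le_jordanVar g T).trans_lt hg).ne, happrox⟩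

namespace BoundedVariationOn

variable {g : ℝ → X} {T : Set ℝ}

lemma monotone_toReal_eVariationOn_inter_Iic (hg : BoundedVariationOn g T) :
    Monotone fun x => (eVariationOn g (T ∩ Iic x)).toReal := fun _ _ hxy =>
  ENNReal.toReal_mono (hg.mono inter_subset_left)
    (eVariationOn.mono g (inter_subset_inter_right T (Iic_subset_Iic.2 hxy)))

lemma dist_le_dist_toReal_eVariationOn_inter_Iic (hg : BoundedVariationOn g T)
    {s u : ℝ} (hs : s ∈ T) (hu : u ∈ T) :
    dist (g s) (g u) ≤
      dist (eVariationOn g (T ∩ Iic s)).toReal (eVariationOn g (T ∩ Iic u)).toReal := by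
  wlog hsu : s ≤ u generalizing s u
  · rw [dist_comm, dist_comm (ENNReal.toReal _)]
    exact this hu hs (le_of_not_ge hsu)
  have hfin : ∀ S ⊆ T, eVariationOn g S ≠ ⊤ := fun S hS => hg.mono hS
  have hsplit : eVariationOn g (T ∩ Iic s) + eVariationOn g (T ∩ Icc s u) ≤
      eVariationOn g (T ∩ Iic u) := by
    refine (eVariationOn.add_le_union g fun x hx y hy => hx.2.trans hy.2.1).trans ?_
    refine eVariationOn.mono g ?_
    rintro x (hx | hx)
    exacts [⟨hx.1, hx.2.trans hsu⟩, ⟨hx.1, hx.2.2⟩]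
  have hjump : dist (g s) (g u) ≤ (eVariationOn g (T ∩ Icc s u)).toReal := by
    rw [dist_edist]
    exact ENNReal.toReal_mono (hfin _ inter_subset_left)
      (eVariationOn.edist_le g ⟨hs, le_rfl, hsu⟩ ⟨hu, hsu, le_rfl⟩)
  have hsplit' := ENNReal.toReal_mono (hfin _ inter_subset_left) hsplit
  rw [ENNReal.toReal_add (hfin _ inter_subset_left) (hfin _ inter_subset_left)] at hsplit'
  rw [Real.dist_eq, abs_sub_comm]
  exact (le_abs_self _).trans' (by linarith)

lemma exists_pos_forall_dist_lt (hg : BoundedVariationOn g T) {S : Set ℝ} {τ L : ℝ}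
    (hφ : Tendsto (fun x => (eVariationOn g (T ∩ Iic x)).toReal) (𝓝[S] τ) (𝓝 L))
    {η : ℝ} (hη : 0 < η) :
    ∃ δ > 0, ∀ s ∈ T ∩ (S ∩ Metric.ball τ δ), ∀ u ∈ T ∩ (S ∩ Metric.ball τ δ),
      dist (g s) (g u) < η := by
  obtain ⟨δ, hδ, h⟩ := exists_pos_forall_dist_lt_of_tendsto hφ hη
  exact ⟨δ, hδ, fun s hs u hu =>
    (hg.dist_le_dist_toReal_eVariationOn_inter_Iic hs.1 hu.1).trans_lt (h s hs.2 u hu.2)⟩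

lemma exists_pos_forall_dist_lt_left (hg : BoundedVariationOn g T) (τ : ℝ) {η : ℝ}
    (hη : 0 < η) :
    ∃ δ > 0, ∀ s ∈ T ∩ Ioo (τ - δ) τ, ∀ u ∈ T ∩ Ioo (τ - δ) τ, dist (g s) (g u) < η := by
  obtain ⟨δ, hδ, h⟩ :=
    hg.exists_pos_forall_dist_lt (hg.monotone_toReal_eVariationOn_inter_Iic.tendsto_nhdsLT τ) hη
  have hsub : T ∩ Ioo (τ - δ) τ ⊆ T ∩ (Iio τ ∩ Metric.ball τ δ) := fun x hx =>
    ⟨hx.1, hx.2.2, by rw [Real.ball_eq_Ioo]; exact ⟨hx.2.1, by linarith [hx.2.2]⟩⟩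
  exact ⟨δ, hδ, fun s hs u hu => h s (hsub hs) u (hsub hu)⟩

lemma exists_pos_forall_dist_lt_right (hg : BoundedVariationOn g T) (τ : ℝ) {η : ℝ}
    (hη : 0 < η) :
    ∃ δ > 0, ∀ s ∈ T ∩ Ioo τ (τ + δ), ∀ u ∈ T ∩ Ioo τ (τ + δ), dist (g s) (g u) < η := by
  obtain ⟨δ, hδ, h⟩ :=
    hg.exists_pos_forall_dist_lt (hg.monotone_toReal_eVariationOn_inter_Iic.tendsto_nhdsGT τ) hη
  have hsub : T ∩ Ioo τ (τ + δ) ⊆ T ∩ (Ioi τ ∩ Metric.ball τ δ) := fun x hx =>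
    ⟨hx.1, hx.2.1, by rw [Real.ball_eq_Ioo]; exact ⟨by linarith [hx.2.1], hx.2.2⟩⟩
  exact ⟨δ, hδ, fun s hs u hu => h s (hsub hs) u (hsub hu)⟩

end BoundedVariationOn

lemma dist_le_of_forall_dist_le {f g : ℝ → X} {T : Set ℝ} {ε : ℝ}
    (happrox : ∀ t ∈ T, dist (f t) (g t) ≤ ε) {s u : ℝ} (hs : s ∈ T) (hu : u ∈ T) :
    dist (f s) (f u) ≤ ε + dist (g s) (g u) + ε :=
  calc dist (f s) (f u) ≤ dist (f s) (g s) + dist (g s) (g u) + dist (g u) (f u) :=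
        dist_triangle4 _ _ _ _
    _ ≤ ε + dist (g s) (g u) + ε := by
        gcongr
        exacts [happrox s hs, dist_comm (g u) (f u) ▸ happrox u hu]

end Variation

theorem stmt13_general {X : Type*} [PseudoMetricSpace X] (T : Set ℝ)
    (f : ℝ → X) (hfin : ∀ ε : ℝ, 0 < ε → appVar ε f T < ⊤) :
    RegulatedOn f T := by
  constructor
  · intro τ _ _ η hη
    obtain ⟨g, hg, happrox⟩ :=
      exists_boundedVariationOn_of_appVar_lt_top (hfin (η / 4) (by positivity))
    obtain ⟨δ, hδ, hcauchy⟩ := hg.exists_pos_forall_dist_lt_left τ (half_pos hη)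
    refine ⟨δ, hδ, fun s hs u hu => ?_⟩
    linarith [dist_le_of_forall_dist_le happrox hs.1 hu.1, hcauchy s hs u hu]
  · intro τ _ _ η hη
    obtain ⟨g, hg, happrox⟩ :=
      exists_boundedVariationOn_of_appVar_lt_top (hfin (η / 4) (by positivity))
    obtain ⟨δ, hδ, hcauchy⟩ := hg.exists_pos_forall_dist_lt_right τ (half_pos hη)
    refine ⟨δ, hδ, fun s hs u hu => ?_⟩
    linarith [dist_le_of_forall_dist_le happrox hs.1 hu.1, hcauchy s hs u hu]

theorem stmt13 {X : Type*} [PseudoMetricSpace X] (T : Set ℝ) (hT : T.Nonempty)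
    (f : ℝ → X) (hfin : ∀ ε : ℝ, 0 < ε → appVar ε f T < ⊤) :
    RegulatedOn f T :=
  stmt13_general T f hfin
end

section
/- If f : [a,b] → X is regulated (satisfies the Cauchy condition at every one-sided limit point), then V_ε(f,[a,b]) < ∞ for every ε > 0. -/
open Filter Set

/-!
Choose for every `τ ∈ [a,b]` radii `δL τ, δR τ > 0` such that `f` oscillates by at most `ε` on
`(τ - δL τ, τ)` and on `(τ, τ + δR τ)` (the Cauchy conditions, or emptiness of these sets).
Finitely many intervals `(τ - δL τ, τ + δR τ)` cover `[a,b]`, and their centres and right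
endpoints form a finite set `P` such that `f` oscillates by at most `ε` on each cell of `P`
(a point of `P` or an open gap between consecutive points). Replacing `f` on every cell by one of
its values there gives a step function within `ε` of `f` with at most `2 |P|` jumps.
-/

lemma exists_pos_forall_of_nonempty_imp {S : ℝ → Set ℝ} {p : ℝ → ℝ → Prop}
    (h : (∀ δ > 0, (S δ).Nonempty) → ∃ δ > 0, ∀ s ∈ S δ, ∀ u ∈ S δ, p s u) :
    ∃ δ > 0, ∀ s ∈ S δ, ∀ u ∈ S δ, p s u := by
  by_cases hS : ∀ δ > 0, (S δ).Nonempty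
  · exact h hS
  · push Not at hS
    obtain ⟨δ, hδ, hempty⟩ := hS
    exact ⟨δ, hδ, by simp [hempty]⟩

section CellIndex

variable {α : Type*} [LinearOrder α] (P : Finset α)

/-- Numbers the cells of `P` (its points and the open gaps between them) in increasing order. -/
def cellIndex (t : α) : ℕ := (P.filter (· < t)).card + (P.filter (· ≤ t)).card

variable {P}

lemma card_filter_lt_mono : Monotone fun t : α => (P.filter (· < t)).card :=
  fun _ _ hst => Finset.card_le_card (Finset.monotone_filter_right _ fun _ _ h => h.trans_le hst)

lemma card_filter_le_mono : Monotone fun t : α => (P.filter (· ≤ t)).card :=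
  fun _ _ hst => Finset.card_le_card (Finset.monotone_filter_right _ fun _ _ h => h.trans hst)

variable (P)

lemma cellIndex_mono : Monotone (cellIndex P) :=
  card_filter_lt_mono.add card_filter_le_mono

lemma cellIndex_le (t : α) : cellIndex P t ≤ 2 * P.card := by
  unfold cellIndex
  linarith [P.card_filter_le (· < t), P.card_filter_le (· ≤ t)]

variable {P}

lemma cellIndex_lt_of_mem_Icc {p s t : α} (hp : p ∈ P) (hst : s < t) (hpst : p ∈ Icc s t) :
    cellIndex P s < cellIndex P t := by
  unfold cellIndex
  rcases hpst.2.lt_or_eq with hpt | rfl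
  · have : (P.filter (· < s)).card < (P.filter (· < t)).card :=
      Finset.card_lt_card <| (Finset.ssubset_iff_of_subset
        (Finset.monotone_filter_right _ fun _ _ h => h.trans hst)).2
        ⟨p, by simp [hp, hpt], by simp [hpst.1]⟩
    linarith [card_filter_le_mono (P := P) hst.le]
  · have : (P.filter (· ≤ s)).card < (P.filter (· ≤ p)).card :=
      Finset.card_lt_card <| (Finset.ssubset_iff_of_subset
        (Finset.monotone_filter_right _ fun _ _ h => h.trans hst.le)).2
        ⟨p, by simp [hp], by simp [hst]⟩
    linarith [card_filter_lt_mono (P := P) hst.le]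

end CellIndex

section Regulated

variable {X : Type*} [PseudoMetricSpace X] {f : ℝ → X} {T : Set ℝ}

lemma RegulatedOn.exists_oscillation_le (hf : RegulatedOn f T) {τ : ℝ} (hτ : τ ∈ T) {η : ℝ}
    (hη : 0 < η) :
    (∃ δ > 0, ∀ s ∈ T ∩ Ioo (τ - δ) τ, ∀ u ∈ T ∩ Ioo (τ - δ) τ, dist (f s) (f u) ≤ η) ∧
      ∃ δ > 0, ∀ s ∈ T ∩ Ioo τ (τ + δ), ∀ u ∈ T ∩ Ioo τ (τ + δ), dist (f s) (f u) ≤ η :=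
  ⟨exists_pos_forall_of_nonempty_imp (hf.1 τ hτ · η hη),
    exists_pos_forall_of_nonempty_imp (hf.2 τ hτ · η hη)⟩

lemma RegulatedOn.exists_finset_forall_dist_le (hf : RegulatedOn f T) (hT : IsCompact T)
    {ε : ℝ} (hε : 0 < ε) :
    ∃ P : Finset ℝ, ∀ s ∈ T, ∀ t ∈ T, s < t → (∀ p ∈ P, p ∉ Icc s t) → dist (f s) (f t) ≤ ε := by
  choose! δL hδL hL using fun τ (hτ : τ ∈ T) => (hf.exists_oscillation_le hτ hε).1
  choose! δR hδR hR using fun τ (hτ : τ ∈ T) => (hf.exists_oscillation_le hτ hε).2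
  obtain ⟨Q, hQT, hcover⟩ := hT.elim_nhds_subcover (fun τ => Ioo (τ - δL τ) (τ + δR τ))
    fun τ hτ => Ioo_mem_nhds (by linarith [hδL τ hτ]) (by linarith [hδR τ hτ])
  refine ⟨Q ∪ Q.image (fun τ => τ + δR τ), fun s hs t ht hst hP => ?_⟩
  obtain ⟨τ, hτQ, hsτ⟩ := mem_iUnion₂.1 (hcover hs)
  rcases lt_or_ge τ s with hτs | hsτ'
  · -- the cover only places `s` near `τ`; the cut point `τ + δR τ` keeps `t` below `τ + δR τ`
    have htδ : t < τ + δR τ := by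
      by_contra! h
      exact hP _ (Finset.mem_union_right _ (Finset.mem_image_of_mem _ hτQ)) ⟨hsτ.2.le, h⟩
    exact hR τ (hQT τ hτQ) s ⟨hs, hτs, hsτ.2⟩ t ⟨ht, hτs.trans hst, htδ⟩
  · have htτ : t < τ := lt_of_not_ge fun h => hP τ (Finset.mem_union_left _ hτQ) ⟨hsτ', h⟩
    exact hL τ (hQT τ hτQ) s ⟨hs, hsτ.1, hst.trans htτ⟩ t ⟨ht, hsτ.1.trans hst, htτ⟩

lemma RegulatedOn.exists_finset_dist_le_of_cellIndex_eq (hf : RegulatedOn f T)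
    (hT : IsCompact T) {ε : ℝ} (hε : 0 < ε) :
    ∃ P : Finset ℝ, ∀ s ∈ T, ∀ t ∈ T, cellIndex P s = cellIndex P t → dist (f s) (f t) ≤ ε := by
  obtain ⟨P, hP⟩ := hf.exists_finset_forall_dist_le hT hε
  refine ⟨P, fun s hs t ht hst => ?_⟩
  rcases lt_trichotomy s t with hlt | rfl | hlt
  · exact hP s hs t ht hlt fun p hp hpI => (cellIndex_lt_of_mem_Icc hp hlt hpI).ne hst
  · simpa using hε.le
  · rw [dist_comm]
    exact hP t ht s hs hlt fun p hp hpI => (cellIndex_lt_of_mem_Icc hp hlt hpI).ne' hst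

end Regulated

lemma Fin.sum_succ_tsub_castSucc {n : ℕ} {v : Fin (n + 1) → ℕ} (hv : Monotone v) :
    ∑ i : Fin n, (v i.succ - v i.castSucc) = v (Fin.last n) - v 0 := by
  induction n with
  | zero => simp
  | succ n ih =>
    have h0 := hv (Fin.zero_le (Fin.last n).castSucc)
    have h1 := hv (Fin.castSucc_le_succ (Fin.last n))
    have := ih (v := v ∘ Fin.castSucc) (hv.comp Fin.strictMono_castSucc.monotone)
    simp only [Function.comp_apply, ← Fin.succ_castSucc, Fin.castSucc_zero] at this
    rw [Fin.sum_univ_castSucc, this, ← Fin.succ_last]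
    omega

section Variation

variable {X : Type*} [PseudoMetricSpace X]

lemma jordanVar_comp_le_mul_ediam (F : ℕ → X) {ι : ℝ → ℕ} (hι : Monotone ι) {M : ℕ}
    (hM : ∀ t, ι t ≤ M) (S : Set ℝ) :
    jordanVar (F ∘ ι) S ≤ M * Metric.ediam (F '' Iic M) := by
  set D := Metric.ediam (F '' Iic M)
  refine iSup_le fun n => iSup_le fun t => iSup_le fun ht => iSup_le fun _ => ?_
  set v : Fin (n + 1) → ℕ := fun i => ι (t i)
  have hv : Monotone v := hι.comp ht
  have hstep : ∀ i : Fin n,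
      edist (F (v i.succ)) (F (v i.castSucc)) ≤ (v i.succ - v i.castSucc : ℕ) * D := by
    intro i
    rcases eq_or_ne (v i.succ) (v i.castSucc) with heq | hne
    · simp [heq]
    · have hjump : 1 ≤ v i.succ - v i.castSucc := by
        have := hv (Fin.castSucc_le_succ i); omega
      calc edist (F (v i.succ)) (F (v i.castSucc)) ≤ D :=
            Metric.edist_le_ediam_of_mem (mem_image_of_mem F (mem_Iic.2 (hM _)))
              (mem_image_of_mem F (mem_Iic.2 (hM _)))
        _ ≤ _ := le_mul_of_one_le_left' (by exact_mod_cast hjump)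
  calc ∑ i : Fin n, edist ((F ∘ ι) (t i.succ)) ((F ∘ ι) (t i.castSucc))
      ≤ ∑ i : Fin n, ((v i.succ - v i.castSucc : ℕ) : ENNReal) * D :=
        Finset.sum_le_sum fun i _ => hstep i
    _ = (v (Fin.last n) - v 0 : ℕ) * D := by
      rw [← Finset.sum_mul, ← Nat.cast_sum, Fin.sum_succ_tsub_castSucc hv]
    _ ≤ M * D := by
      gcongr
      exact (Nat.sub_le _ _).trans (hM _)

lemma jordanVar_comp_lt_top (F : ℕ → X) {ι : ℝ → ℕ} (hι : Monotone ι) {M : ℕ}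
    (hM : ∀ t, ι t ≤ M) (S : Set ℝ) : jordanVar (F ∘ ι) S < ⊤ :=
  (jordanVar_comp_le_mul_ediam F hι hM S).trans_lt <| ENNReal.mul_lt_top
    (ENNReal.natCast_lt_top M) ((finite_Iic M).image F).isBounded.ediam_ne_top.lt_top

end Variation

theorem stmt14_general {X : Type*} [PseudoMetricSpace X] (a b : ℝ)
    (f : ℝ → X) (hreg : RegulatedOn f (Set.Icc a b)) :
    ∀ ε : ℝ, 0 < ε → appVar ε f (Set.Icc a b) < ⊤ := by
  intro ε hε
  obtain ⟨P, hP⟩ := hreg.exists_finset_dist_le_of_cellIndex_eq isCompact_Icc hε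
  let g := (f ∘ Function.invFunOn (cellIndex P) (Icc a b)) ∘ cellIndex P
  have hg_var : jordanVar g (Icc a b) < ⊤ :=
    jordanVar_comp_lt_top _ (cellIndex_mono P) (cellIndex_le P) _
  have hg_approx : ∀ t ∈ Icc a b, dist (f t) (g t) ≤ ε := fun t ht =>
    hP t ht _ (Function.invFunOn_mem ⟨t, ht, rfl⟩) (Function.invFunOn_eq ⟨t, ht, rfl⟩).symm
  exact (iInf₂_le_of_le g hg_var <| iInf_le _ hg_approx).trans_lt hg_var

theorem stmt14 {X : Type*} [PseudoMetricSpace X] (a b : ℝ) (hab : a ≤ b)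
    (f : ℝ → X) (hreg : RegulatedOn f (Set.Icc a b)) :
    ∀ ε : ℝ, 0 < ε → appVar ε f (Set.Icc a b) < ⊤ :=
  stmt14_general a b f hreg
end

section
/- If f_j : T → X converge uniformly to f : T → X, then for every ε > 0: V_{ε⁺}(f,T) ≤ liminf_j V_ε(f_j,T) ≤ limsup_j V_ε(f_j,T) ≤ V_{ε⁻}(f,T), where V_{ε⁺} and V_{ε⁻} are the right and left limits of the nonincreasing map ε ↦ V_ε(f,T). -/
open Filter Set

lemma appVar_trans {X : Type*} [PseudoMetricSpace X] {ε ε' : ℝ} {f h : ℝ → X} {T : Set ℝ}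
    (hd : ∀ t ∈ T, dist (f t) (h t) + ε ≤ ε') : appVar ε' f T ≤ appVar ε h T := by
  refine le_iInf fun g => le_iInf fun hg => le_iInf fun hgd => ?_
  refine iInf_le_of_le g (iInf_le_of_le hg (iInf_le_of_le ?_ le_rfl))
  intro t ht
  calc dist (f t) (g t) ≤ dist (f t) (h t) + dist (h t) (g t) := dist_triangle _ _ _
    _ ≤ dist (f t) (h t) + ε := by linarith [hgd t ht]
    _ ≤ ε' := hd t ht

theorem stmt16 {X : Type*} [PseudoMetricSpace X] (T : Set ℝ) (hT : T.Nonempty)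
    (F : ℕ → ℝ → X) (f : ℝ → X)
    (hunif : Filter.Tendsto (fun j => ⨆ t ∈ T, edist (F j t) (f t))
      Filter.atTop (nhds 0)) (ε : ℝ) (hε : 0 < ε) :
    (⨆ ε' ∈ Set.Ioi ε, appVar ε' f T) ≤
        Filter.liminf (fun j => appVar ε (F j) T) Filter.atTop ∧
    Filter.liminf (fun j => appVar ε (F j) T) Filter.atTop ≤
        Filter.limsup (fun j => appVar ε (F j) T) Filter.atTop ∧
    Filter.limsup (fun j => appVar ε (F j) T) Filter.atTop ≤
        ⨅ ε' ∈ Set.Ioo 0 ε, appVar ε' f T := by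
  have key : ∀ δ : ℝ, 0 < δ → ∀ᶠ j in atTop, ∀ t ∈ T, dist (F j t) (f t) < δ := by
    intro δ hδ
    have h0 : (0 : ENNReal) < ENNReal.ofReal δ := ENNReal.ofReal_pos.mpr hδ
    filter_upwards [hunif.eventually_lt_const h0] with j hj t ht
    have : edist (F j t) (f t) ≤ ⨆ t ∈ T, edist (F j t) (f t) := le_iSup₂ (f := fun t (_ : t ∈ T) => edist (F j t) (f t)) t ht
    exact edist_lt_ofReal.mp (lt_of_le_of_lt this hj)
  refine ⟨?_, liminf_le_limsup, ?_⟩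
  · refine iSup₂_le fun ε' hε' => ?_
    have hδ : (0:ℝ) < ε' - ε := by simpa using sub_pos.mpr (mem_Ioi.mp hε')
    refine le_liminf_of_le (by isBoundedDefault) ?_
    filter_upwards [key _ hδ] with j hj
    refine appVar_trans fun t ht => ?_
    have := hj t ht
    rw [dist_comm]
    linarith
  · refine le_iInf₂ fun ε' hε' => ?_
    obtain ⟨hε'0, hε'ε⟩ := hε'
    have hδ : (0:ℝ) < ε - ε' := sub_pos.mpr hε'ε
    refine limsup_le_of_le (by isBoundedDefault) ?_
    filter_upwards [key _ hδ] with j hj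
    refine appVar_trans fun t ht => ?_
    have := hj t ht
    linarith
end

section
/- Helly selection principle for monotone functions on an arbitrary subset of ℝ: every uniformly bounded sequence of nondecreasing functions from T ⊆ ℝ into ℝ has a subsequence converging pointwise on T to a bounded nondecreasing function T → ℝ. -/
open Filter Set

/-- Extraction of a pointwise convergent subsequence on a countable set, for a
uniformly bounded family of functions. -/
lemma helly_extract (C : ℝ) (S : Set ℝ) (hS : S.Countable) (G : ℕ → ℝ → ℝ)
    (hb : ∀ j, ∀ t ∈ S, |G j t| ≤ C) :
    ∃ φ : ℕ → ℕ, StrictMono φ ∧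
      ∀ t ∈ S, ∃ l, Tendsto (fun k => G (φ k) t) atTop (nhds l) := by
  rcases S.eq_empty_or_nonempty with rfl | hne
  · exact ⟨id, strictMono_id, fun t ht => absurd ht (notMem_empty t)⟩
  obtain ⟨e, rfl⟩ := hS.exists_eq_range hne
  have hmem : ∀ j n, G j (e n) ∈ Set.Icc (-C) C := fun j n => by
    have := hb j (e n) ⟨n, rfl⟩
    rw [Set.mem_Icc]; exact abs_le.1 this
  set x : ℕ → ℕ → Set.Icc (-C) C := fun j n => ⟨G j (e n), hmem j n⟩ with hx
  obtain ⟨a, φ, hφ, ha⟩ := SeqCompactSpace.tendsto_subseq x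
  refine ⟨φ, hφ, ?_⟩
  rintro t ⟨n, rfl⟩
  refine ⟨(a n : ℝ), ?_⟩
  have h1 : Tendsto (fun k => (x ∘ φ) k n) atTop (nhds (a n)) :=
    ((continuous_apply n).tendsto a).comp ha
  exact (continuous_subtype_val.tendsto (a n)).comp h1

/-- A set of reals admitting a "separating" pair of functions `L < U` with
disjoint ordered intervals is countable. -/
lemma countable_of_btwn (B : Set ℝ) (L U : ℝ → ℝ) (hLU : ∀ t ∈ B, L t < U t)
    (hsep : ∀ s ∈ B, ∀ t ∈ B, s < t → U s ≤ L t) : B.Countable := by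
  have key : ∀ t ∈ B, ∃ q : ℚ, L t < (q : ℝ) ∧ (q : ℝ) < U t :=
    fun t ht => exists_rat_btwn (hLU t ht)
  choose! q hq1 hq2 using key
  have hinj : Set.InjOn q B := by
    intro s hs t ht he
    rcases lt_trichotomy s t with h | h | h
    · have : (q s : ℝ) < q t :=
        (hq2 s hs).trans ((hsep s hs t ht h).trans_lt (hq1 t ht))
      exact absurd (congrArg (fun r : ℚ => (r : ℝ)) he) this.ne
    · exact h
    · have : (q t : ℝ) < q s :=
        (hq2 t ht).trans ((hsep t ht s hs h).trans_lt (hq1 s hs))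
      exact absurd (congrArg (fun r : ℚ => (r : ℝ)) he) this.ne'
  exact Set.countable_of_injective_of_countable_image hinj (Set.to_countable _)

theorem stmt18 (T : Set ℝ) (hT : T.Nonempty) (F : ℕ → ℝ → ℝ)
    (hmono : ∀ j, MonotoneOn (F j) T)
    (C : ℝ) (hbdd : ∀ j, ∀ t ∈ T, |F j t| ≤ C) :
    ∃ φ : ℕ → ℕ, StrictMono φ ∧ ∃ f : ℝ → ℝ, MonotoneOn f T ∧
      (∃ C' : ℝ, ∀ t ∈ T, |f t| ≤ C') ∧
      ∀ t ∈ T, Filter.Tendsto (fun k => F (φ k) t) Filter.atTop (nhds (f t)) := by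
  classical
  -- countable dense subset of T
  obtain ⟨s0, hs0c, hs0d⟩ := TopologicalSpace.exists_countable_dense T
  set D0 : Set ℝ := Subtype.val '' s0 with hD0
  have hD0T : D0 ⊆ T := by rintro _ ⟨x, _, rfl⟩; exact x.2
  have hD0c : D0.Countable := hs0c.image _
  have hD0near : ∀ t ∈ T, ∀ ε > 0, ∃ d ∈ D0, |d - t| < ε := by
    intro t ht ε hε
    have hcl : (⟨t, ht⟩ : T) ∈ closure s0 := hs0d _
    obtain ⟨y, hy, hdy⟩ := Metric.mem_closure_iff.1 hcl ε hε
    refine ⟨(y : ℝ), ⟨y, hy, rfl⟩, ?_⟩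
    have : dist (⟨t, ht⟩ : T) y = |(y : ℝ) - t| := by
      rw [Subtype.dist_eq, Real.dist_eq, abs_sub_comm]
    rwa [this] at hdy
  -- left-isolated and right-isolated points
  set SL : Set ℝ := {t | t ∈ T ∧ ∃ ε > 0, ∀ u ∈ T, u ∉ Set.Ioo (t - ε) t} with hSL
  set SR : Set ℝ := {t | t ∈ T ∧ ∃ ε > 0, ∀ u ∈ T, u ∉ Set.Ioo t (t + ε)} with hSR
  have hSLc : SL.Countable := by
    have key : ∀ t ∈ SL, ∃ ε, 0 < ε ∧ ∀ u ∈ T, u ∉ Set.Ioo (t - ε) t := by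
      rintro t ⟨-, ε, hε, h⟩; exact ⟨ε, hε, h⟩
    choose! εL hεL hL using key
    refine countable_of_btwn SL (fun t => t - εL t) (fun t => t) ?_ ?_
    · intro t ht; have := hεL t ht; linarith
    · intro s hs t ht hst
      by_contra hcon
      push_neg at hcon
      exact hL t ht s hs.1 ⟨hcon, hst⟩
  have hSRc : SR.Countable := by
    have key : ∀ t ∈ SR, ∃ ε, 0 < ε ∧ ∀ u ∈ T, u ∉ Set.Ioo t (t + ε) := by
      rintro t ⟨-, ε, hε, h⟩; exact ⟨ε, hε, h⟩
    choose! εR hεR hR using key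
    refine countable_of_btwn SR (fun t => t) (fun t => t + εR t) ?_ ?_
    · intro t ht; have := hεR t ht; linarith
    · intro s hs t ht hst
      by_contra hcon
      push_neg at hcon
      exact hR s hs t ht.1 ⟨hst, hcon⟩
  -- first extraction: convergence on D1 = D0 ∪ SL ∪ SR
  set D1 : Set ℝ := D0 ∪ SL ∪ SR with hD1
  have hD1T : D1 ⊆ T := by
    rintro t ((h | h) | h)
    · exact hD0T h
    · exact h.1
    · exact h.1
  have hD1c : D1.Countable := (hD0c.union hSLc).union hSRc
  obtain ⟨φ₀, hφ₀, hconv⟩ :=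
    helly_extract C D1 hD1c F (fun j t ht => hbdd j t (hD1T ht))
  -- boundedness facts
  have hub : ∀ t ∈ T, IsBoundedUnder (· ≤ ·) atTop (fun k => F (φ₀ k) t) :=
    fun t ht => ⟨C, eventually_map.2 (Eventually.of_forall fun k => (abs_le.1 (hbdd _ t ht)).2)⟩
  have hlb : ∀ t ∈ T, IsBoundedUnder (· ≥ ·) atTop (fun k => F (φ₀ k) t) :=
    fun t ht => ⟨-C, eventually_map.2 (Eventually.of_forall fun k => (abs_le.1 (hbdd _ t ht)).1)⟩
  -- bad set
  set B : Set ℝ :=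
    {t | t ∈ T ∧ ¬ ∃ l, Tendsto (fun k => F (φ₀ k) t) atTop (nhds l)} with hB
  have hBD1 : ∀ t ∈ B, t ∉ D1 := fun t ht hd => ht.2 (hconv t hd)
  have hBc : B.Countable := by
    refine countable_of_btwn B
      (fun t => liminf (fun k => F (φ₀ k) t) atTop)
      (fun t => limsup (fun k => F (φ₀ k) t) atTop) ?_ ?_
    · intro t ht
      rcases eq_or_lt_of_le (liminf_le_limsup (hub t ht.1) (hlb t ht.1)) with heq | h
      · exact absurd ⟨_, tendsto_of_liminf_eq_limsup heq rfl (hub t ht.1) (hlb t ht.1)⟩ ht.2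
      · exact h
    · intro s hs t ht hst
      -- t is not left-isolated, so find u ∈ T with s < u < t, then d ∈ D0 near u
      have htSL : t ∉ SL := fun h => hBD1 t ht (Or.inl (Or.inr h))
      have hu : ∃ u ∈ T, u ∈ Set.Ioo (t - (t - s)) t := by
        by_contra hcon
        push_neg at hcon
        exact htSL ⟨ht.1, t - s, by linarith, hcon⟩
      obtain ⟨u, huT, hu1, hu2⟩ := hu
      have hu1' : s < u := by linarith
      obtain ⟨d, hdD0, hdu⟩ := hD0near u huT (min (u - s) (t - u))
        (lt_min (by linarith) (by linarith))
      rw [abs_sub_lt_iff] at hdu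
      have hsd : s < d := by
        have := hdu.2; have := min_le_left (u - s) (t - u); linarith
      have hdt : d < t := by
        have := hdu.1; have := min_le_right (u - s) (t - u); linarith
      obtain ⟨ld, hld⟩ := hconv d (Or.inl (Or.inl hdD0))
      have h1 : limsup (fun k => F (φ₀ k) s) atTop ≤ ld := by
        rw [← hld.limsup_eq]
        exact limsup_le_limsup
          (Eventually.of_forall fun k => hmono (φ₀ k) hs.1 (hD0T hdD0) hsd.le)
          ((hlb s hs.1).isCoboundedUnder_le) (hub d (hD0T hdD0))
      have h2 : ld ≤ liminf (fun k => F (φ₀ k) t) atTop := by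
        rw [← hld.liminf_eq]
        exact liminf_le_liminf
          (Eventually.of_forall fun k => hmono (φ₀ k) (hD0T hdD0) ht.1 hdt.le)
          (hlb d (hD0T hdD0)) ((hub t ht.1).isCoboundedUnder_ge)
      exact h1.trans h2
  -- second extraction: convergence on B
  obtain ⟨ψ, hψ, hconvB⟩ :=
    helly_extract C B hBc (fun k => F (φ₀ k)) (fun k t ht => hbdd _ t ht.1)
  have hall : ∀ t ∈ T, ∃ l, Tendsto (fun k => F (φ₀ (ψ k)) t) atTop (nhds l) := by
    intro t ht
    by_cases hb : t ∈ B
    · exact hconvB t hb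
    · have : ∃ l, Tendsto (fun k => F (φ₀ k) t) atTop (nhds l) := by
        by_contra hcon; exact hb ⟨ht, hcon⟩
      obtain ⟨l, hl⟩ := this
      exact ⟨l, hl.comp hψ.tendsto_atTop⟩
  set f : ℝ → ℝ := fun t => limUnder atTop (fun k => F (φ₀ (ψ k)) t) with hf
  have hft : ∀ t ∈ T, Tendsto (fun k => F (φ₀ (ψ k)) t) atTop (nhds (f t)) := by
    intro t ht
    obtain ⟨l, hl⟩ := hall t ht
    have : f t = l := hl.limUnder_eq
    rwa [this]
  refine ⟨φ₀ ∘ ψ, hφ₀.comp hψ, f, ?_, ⟨C, ?_⟩, ?_⟩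
  · intro s hs t ht hst
    exact le_of_tendsto_of_tendsto' (hft s hs) (hft t ht)
      (fun k => hmono _ hs ht hst)
  · intro t ht
    refine abs_le.2 ⟨?_, ?_⟩
    · exact ge_of_tendsto (hft t ht)
        (Eventually.of_forall fun k => (abs_le.1 (hbdd _ t ht)).1)
    · exact le_of_tendsto (hft t ht)
        (Eventually.of_forall fun k => (abs_le.1 (hbdd _ t ht)).2)
  · intro t ht
    exact hft t ht
end
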